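/- arXiv:1010.6261 — 2 statements merged into one kernel-verified Lean document; each statement's English description precedes it below -/
import Mathlib

section
/- For n ≥ 1 and 1 ≤ i ≤ n, the quantity |𝓜_{2n+1,2i}| is symmetric in i: |𝓜_{2n+1,2i}| = |𝓜_{2n+1,2(n−i+1)}|. -/
/-- `i` (1-based) is a descent of the word `w`, i.e. `1 ≤ i ≤ w.length - 1` and
`w_i > w_{i+1}` (1-based entries). -/
def DescentAt (w : List ℕ) (i : ℕ) : Prop :=
  1 ≤ i ∧ i + 1 ≤ w.length ∧ w.getD i 0 < w.getD (i - 1) 0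

instance (w : List ℕ) (i : ℕ) : Decidable (DescentAt w i) :=
  inferInstanceAs (Decidable (_ ∧ _ ∧ _))

/-- `i` (1-based) is an ascent of the word `w`. -/
def AscentAt (w : List ℕ) (i : ℕ) : Prop :=
  1 ≤ i ∧ i + 1 ≤ w.length ∧ w.getD (i - 1) 0 < w.getD i 0

instance (w : List ℕ) (i : ℕ) : Decidable (AscentAt w i) :=
  inferInstanceAs (Decidable (_ ∧ _ ∧ _))

/-- The set of descent positions of `w`. -/
def descents (w : List ℕ) : Finset ℕ :=
  (Finset.range w.length).filter (fun i => DescentAt w i)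

/-- `w` is a permutation of `[n] = {1,…,n}`, written as a word. -/
def IsPermWord (n : ℕ) (w : List ℕ) : Prop :=
  w.length = n ∧ w.Nodup ∧ ∀ x ∈ w, 1 ≤ x ∧ x ≤ n

/-- Two words of distinct entries are in the same relative order. -/
def SameRelOrder (u v : List ℕ) : Prop :=
  u.length = v.length ∧
    ∀ p q, p < u.length → q < u.length →
      (u.getD p 0 < u.getD q 0 ↔ v.getD p 0 < v.getD q 0)

/-- `σ ≺ w`: the word `w` contains the pattern `σ`, i.e. `w` has a subsequence
in the same relative order as `σ`. -/
def ContainsPattern (σ w : List ℕ) : Prop :=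
  ∃ s : List ℕ, s.Sublist w ∧ SameRelOrder s σ

/-- `w` is a minimal permutation with `d` descents: it has exactly `d` descents and
no strictly shorter permutation with exactly `d` descents occurs in it as a pattern. -/
def MinimalPerm (d : ℕ) (w : List ℕ) : Prop :=
  (descents w).card = d ∧
    ∀ (m : ℕ) (σ : List ℕ), IsPermWord m σ → m < w.length →
      (descents σ).card = d → ¬ ContainsPattern σ w

/-- `w` is a minimal permutation (with its own number of descents). -/
def IsMinimal (w : List ℕ) : Prop :=
  MinimalPerm (descents w).card w

/-- The set `𝓕_d(n)` of minimal permutations of length `n` with `d` descents. -/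
def minimalPerms (d n : ℕ) : Set (List ℕ) :=
  {w | IsPermWord n w ∧ MinimalPerm d w}

/-- `f_d(n) = |𝓕_d(n)|`. -/
noncomputable def fCount (d n : ℕ) : ℕ :=
  (minimalPerms d n).ncard

/-- `w` has ascent sequence `a`: `w` decomposes into maximal strictly decreasing
runs whose lengths, from left to right, are the entries of `a` (maximality is
expressed by the junctions between consecutive runs being ascents). -/
def HasAscentSeq (w a : List ℕ) : Prop :=
  ∃ bs : List (List ℕ), bs.flatten = w ∧ bs.map List.length = a ∧
    (∀ b ∈ bs, b ≠ [] ∧ List.Chain' (fun x y => x > y) b) ∧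
    List.Chain' (fun b c => ∃ x ∈ b.getLast?, ∃ y ∈ c.head?, x < y) bs

/-- The set `𝓕_{a₁,…,a_k}(n)` of minimal permutations of length `n` with
ascent sequence `a = (a₁,…,a_k)`. -/
def minimalPermsAsc (n : ℕ) (a : List ℕ) : Set (List ℕ) :=
  {w | IsPermWord n w ∧ IsMinimal w ∧ HasAscentSeq w a}

/-- `F_{a₁,…,a_k}(n) = |𝓕_{a₁,…,a_k}(n)|`. -/
noncomputable def FCount (n : ℕ) (a : List ℕ) : ℕ :=
  (minimalPermsAsc n a).ncard

/-- A standard filling of a given cell set by `1,…,N`: zero off the cells,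
a bijection from the cells onto `{1,…,N}`, strictly increasing along rows
(second coordinate) and columns (first coordinate). -/
def IsTableauOn (cell : ℕ → ℕ → Prop) (N : ℕ) (T : ℕ → ℕ → ℕ) : Prop :=
  (∀ r c, ¬ cell r c → T r c = 0) ∧
  (∀ r c, cell r c → 1 ≤ T r c ∧ T r c ≤ N) ∧
  (∀ r c r' c', cell r c → cell r' c' → T r c = T r' c' → r = r' ∧ c = c') ∧
  (∀ v, 1 ≤ v → v ≤ N → ∃ r c, cell r c ∧ T r c = v) ∧
  (∀ r c, cell r c → cell r (c + 1) → T r c < T r (c + 1)) ∧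
  (∀ r c, cell r c → cell (r + 1) c → T r c < T (r + 1) c)

/-- The cells of the skew shape `λ/μ` (rows indexed from `0` downward,
columns from `0` rightward): row `r` contains columns `μ_r ≤ c < λ_r`. -/
def skewCell (l m : List ℕ) (r c : ℕ) : Prop :=
  r < l.length ∧ m.getD r 0 ≤ c ∧ c < l.getD r 0

/-- A standard skew Young tableau of shape `λ/μ`. -/
def IsSkewSYT (l m : List ℕ) (T : ℕ → ℕ → ℕ) : Prop :=
  IsTableauOn (skewCell l m) (l.sum - m.sum) T

/-- `f^{λ/μ}`, the number of standard skew Young tableaux of shape `λ/μ`. -/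
noncomputable def skewSYTCount (l m : List ℕ) : ℕ :=
  Nat.card {T : ℕ → ℕ → ℕ // IsSkewSYT l m T}

/-- The row index of the top cell of column `c` in the 2-regular skew shape
with column lengths `a₁,…,a_k` (columns normalized so that the last column
starts in row `0`; consecutive columns overlap in exactly two rows). -/
def colTop (a : List ℕ) (c : ℕ) : ℕ :=
  (a.drop (c + 1)).sum - 2 * (a.length - 1 - c)

/-- The cells of the 2-regular skew shape with column lengths `a₁,…,a_k`:
column `c` occupies the `a_c` rows starting at `colTop a c`, so that any two
consecutive columns overlap in exactly two rows. -/
def twoRegCell (a : List ℕ) (r c : ℕ) : Prop :=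
  c < a.length ∧ colTop a c ≤ r ∧ r < colTop a c + a.getD c 0

/-- A 2-regular skew tableau with column lengths `a₁,…,a_k`: a standard filling
of the 2-regular skew shape by `1,…,a₁+⋯+a_k`. -/
def Is2RegularTableau (a : List ℕ) (T : ℕ → ℕ → ℕ) : Prop :=
  IsTableauOn (twoRegCell a) a.sum T

/-- `𝓜_{2n+1,2i}`: minimal permutations of length `2n+1` with `n+1` descents whose
unique pair of consecutive descents is `(2i-1, 2i)`. -/
def Mset (n i : ℕ) : Set (List ℕ) :=
  {w | IsPermWord (2 * n + 1) w ∧ MinimalPerm (n + 1) w ∧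
    DescentAt w (2 * i - 1) ∧ DescentAt w (2 * i) ∧
    ∀ j, DescentAt w j → DescentAt w (j + 1) → j = 2 * i - 1}

/-- Elementary Knuth transformations on words of distinct integers. -/
inductive KnuthStep : List ℕ → List ℕ → Prop
  | k1 (u v : List ℕ) (x y z : ℕ) (hxy : x < y) (hyz : y < z) :
      KnuthStep (u ++ [x, z, y] ++ v) (u ++ [z, x, y] ++ v)
  | k2 (u v : List ℕ) (x y z : ℕ) (hxy : x < y) (hyz : y < z) :
      KnuthStep (u ++ [y, x, z] ++ v) (u ++ [y, z, x] ++ v)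

/-- Knuth equivalence of words. -/
def KnuthEquiv : List ℕ → List ℕ → Prop := Relation.EqvGen KnuthStep

/-! The reverse-complement `w ↦ (N+1-w_L, …, N+1-w_1)` is an involution on permutations of `[N]`
that preserves descent numbers and pattern containment (patterns being transformed the same way),
and it moves a descent at position `j` to position `L - j`. For `N = L = 2n+1` it therefore
exchanges the consecutive-descent pairs `(2i-1, 2i)` and `(2(n-i+1)-1, 2(n-i+1))`, so it is a
bijection `𝓜_{2n+1,2i} → 𝓜_{2n+1,2(n-i+1)}`. -/

def revCompl (N : ℕ) (w : List ℕ) : List ℕ := (w.map (N + 1 - ·)).reverse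

section RevCompl

variable {N : ℕ} {w : List ℕ}

@[simp] lemma length_revCompl : (revCompl N w).length = w.length := by
  simp [revCompl]

lemma mem_descents {j : ℕ} : j ∈ descents w ↔ DescentAt w j := by
  rw [descents, Finset.mem_filter, Finset.mem_range]
  exact ⟨And.right, fun h => ⟨by unfold DescentAt at h; omega, h⟩⟩

lemma getD_revCompl {p : ℕ} (hp : p < w.length) :
    (revCompl N w).getD p 0 = N + 1 - w.getD (w.length - 1 - p) 0 := by
  rw [List.getD_eq_getElem _ _ (by simpa using hp), List.getD_eq_getElem _ _ (by omega)]
  simp [revCompl]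

lemma getD_mem_of_lt {k : ℕ} (hk : k < w.length) : w.getD k 0 ∈ w := by
  rw [List.getD_eq_getElem _ _ hk]
  exact List.getElem_mem _

lemma revCompl_revCompl (hw : ∀ x ∈ w, x ≤ N) : revCompl N (revCompl N w) = w := by
  rw [revCompl, revCompl, List.map_reverse, List.reverse_reverse, List.map_map]
  conv_rhs => rw [← List.map_id w]
  exact List.map_congr_left fun x hx => by
    have := hw x hx
    simp only [Function.comp_apply, id]
    omega

lemma getD_revCompl_lt_getD_iff (hw : ∀ x ∈ w, x ≤ N) {p q : ℕ} (hp : p < w.length)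
    (hq : q < w.length) :
    (revCompl N w).getD p 0 < (revCompl N w).getD q 0 ↔
      w.getD (w.length - 1 - q) 0 < w.getD (w.length - 1 - p) 0 := by
  have := hw _ (getD_mem_of_lt (show w.length - 1 - p < w.length by omega))
  have := hw _ (getD_mem_of_lt (show w.length - 1 - q < w.length by omega))
  rw [getD_revCompl hp, getD_revCompl hq]
  omega

lemma descentAt_revCompl (hw : ∀ x ∈ w, x ≤ N) {j : ℕ} :
    DescentAt (revCompl N w) j ↔ DescentAt w (w.length - j) := by
  unfold DescentAt
  rw [length_revCompl]
  by_cases hj : 1 ≤ j ∧ j + 1 ≤ w.length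
  · rw [getD_revCompl_lt_getD_iff hw (by omega) (by omega),
      show w.length - 1 - j = w.length - j - 1 by omega,
      show w.length - 1 - (j - 1) = w.length - j by omega]
    omega
  · omega

lemma card_descents_revCompl (hw : ∀ x ∈ w, x ≤ N) :
    (descents (revCompl N w)).card = (descents w).card := by
  refine Finset.card_nbij' (w.length - ·) (w.length - ·) ?_ ?_ ?_ ?_ <;> intro j hj <;>
    simp only [Finset.mem_coe, mem_descents, descentAt_revCompl hw] at hj ⊢
  · exact hj
  · rwa [show w.length - (w.length - j) = j by unfold DescentAt at hj; omega]
  all_goals unfold DescentAt at hj; omega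

end RevCompl

lemma IsPermWord.le {N : ℕ} {w : List ℕ} (hw : IsPermWord N w) : ∀ x ∈ w, x ≤ N :=
  fun x hx => (hw.2.2 x hx).2

lemma IsPermWord.revCompl {N : ℕ} {w : List ℕ} (hw : IsPermWord N w) :
    IsPermWord N (revCompl N w) := by
  obtain ⟨hlen, hnd, hmem⟩ := hw
  refine ⟨by simpa using hlen, ?_, ?_⟩
  · rw [_root_.revCompl, List.nodup_reverse]
    exact hnd.map_on fun x hx y hy h => by have := hmem x hx; have := hmem y hy; omega
  · intro x hx
    simp only [_root_.revCompl, List.mem_reverse, List.mem_map] at hx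
    obtain ⟨y, hy, rfl⟩ := hx
    have := hmem y hy
    omega

lemma SameRelOrder.revCompl {N M : ℕ} {s σ : List ℕ} (hs : ∀ x ∈ s, x ≤ N)
    (hσ : ∀ x ∈ σ, x ≤ M) (h : SameRelOrder s σ) :
    SameRelOrder (revCompl N s) (revCompl M σ) := by
  obtain ⟨hlen, hrel⟩ := h
  refine ⟨by simp [hlen], fun p q hp hq => ?_⟩
  rw [length_revCompl] at hp hq
  rw [getD_revCompl_lt_getD_iff hs hp hq, getD_revCompl_lt_getD_iff hσ (by omega) (by omega),
    hlen]
  exact hrel _ _ (by omega) (by omega)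

lemma ContainsPattern.revCompl {N M : ℕ} {σ w : List ℕ} (hw : ∀ x ∈ w, x ≤ N)
    (hσ : ∀ x ∈ σ, x ≤ M) (h : ContainsPattern σ w) :
    ContainsPattern (revCompl M σ) (revCompl N w) := by
  obtain ⟨s, hsub, hrel⟩ := h
  exact ⟨_root_.revCompl N s, (hsub.map _).reverse,
    hrel.revCompl (fun x hx => hw x (hsub.mem hx)) hσ⟩

lemma MinimalPerm.revCompl {N d : ℕ} {w : List ℕ} (hw : IsPermWord N w)
    (h : MinimalPerm d w) : MinimalPerm d (revCompl N w) := by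
  refine ⟨(card_descents_revCompl hw.le).trans h.1, fun m σ hσ hm hd hpat => ?_⟩
  have hpat' := hpat.revCompl hw.revCompl.le hσ.le
  rw [revCompl_revCompl hw.le] at hpat'
  exact h.2 m (_root_.revCompl m σ) hσ.revCompl (by simpa using hm)
    ((card_descents_revCompl hσ.le).trans hd) hpat'

lemma mapsTo_revCompl_Mset {n i : ℕ} (hi1 : 1 ≤ i) (hi2 : i ≤ n) :
    Set.MapsTo (revCompl (2 * n + 1)) (Mset n i) (Mset n (n - i + 1)) := by
  rintro w ⟨hperm, hmin, hd1, hd2, huniq⟩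
  have hL : w.length = 2 * n + 1 := hperm.1
  simp only [Mset, Set.mem_ofPred_eq, descentAt_revCompl hperm.le, hL]
  refine ⟨hperm.revCompl, hmin.revCompl hperm, ?_, ?_, fun j h1 h2 => ?_⟩
  · rwa [show 2 * n + 1 - (2 * (n - i + 1) - 1) = 2 * i by omega]
  · rwa [show 2 * n + 1 - 2 * (n - i + 1) = 2 * i - 1 by omega]
  · have hj := h2.1
    have := huniq _ h2 (by rwa [show 2 * n + 1 - (j + 1) + 1 = 2 * n + 1 - j by omega])
    omega

theorem Mset_card_symm_general (n i : ℕ) (hi1 : 1 ≤ i) (hi2 : i ≤ n) :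
    (Mset n i).ncard = (Mset n (n - i + 1)).ncard := by
  have hinv (j : ℕ) : Set.LeftInvOn (revCompl (2 * n + 1)) (revCompl (2 * n + 1)) (Mset n j) :=
    fun w hw => revCompl_revCompl hw.1.le
  have hback := mapsTo_revCompl_Mset (n := n) (i := n - i + 1) (by omega) (by omega)
  rw [show n - (n - i + 1) + 1 = i by omega] at hback
  exact (Set.InvOn.bijOn ⟨hinv i, hinv _⟩ (mapsTo_revCompl_Mset hi1 hi2) hback).ncard_eq

/-- `|𝓜_{2n+1,2i}|` is symmetric in `i`:
`|𝓜_{2n+1,2i}| = |𝓜_{2n+1,2(n-i+1)}|`. -/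
theorem Mset_card_symm (n i : ℕ) (hn : 1 ≤ n) (hi1 : 1 ≤ i) (hi2 : i ≤ n) :
    (Mset n i).ncard = (Mset n (n - i + 1)).ncard :=
  Mset_card_symm_general n i hi1 hi2
end

section
/- For 2 ≤ k ≤ ⌊(n+1)/2⌋, the number of standard Young tableaux of shape (n, n+1−k, k) (size 2n+1) equals |𝓣_{2n+1,k}| = ((n−2k+2)/(k−1))·binom(n−1, k−2)·binom(2n+1, n−1). -/
/-!
The largest entry `N + 1` of a standard filling sits in a corner cell, and deleting it leaves a
standard filling of the remaining cells by `1, …, N`; conversely any such filling extends by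
putting `N + 1` into the corner. Hence `f^(a,b,c)` is the sum of `f` over the shapes obtained by
removing one of the (at most three) corners. The hook-length value
`(a+b+c)! (a-b+1)(b-c+1)(a-c+2) / ((a+2)! (b+1)! c!)` satisfies the same recurrence and the same
initial value, and at `(n, n+1-k, k)` it is the stated product of binomial coefficients.
-/

open scoped Nat

def updateEntry (r₀ c₀ v : ℕ) (T : ℕ → ℕ → ℕ) : ℕ → ℕ → ℕ :=
  fun r c => if r = r₀ ∧ c = c₀ then v else T r c

def eraseCell (cell : ℕ → ℕ → Prop) (r₀ c₀ : ℕ) : ℕ → ℕ → Prop :=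
  fun r c => cell r c ∧ ¬(r = r₀ ∧ c = c₀)

section updateEntry

variable {T : ℕ → ℕ → ℕ} {r₀ c₀ v r c : ℕ}

theorem updateEntry_of_ne (h : ¬(r = r₀ ∧ c = c₀)) : updateEntry r₀ c₀ v T r c = T r c :=
  if_neg h

theorem updateEntry_of_eq (h : r = r₀ ∧ c = c₀) : updateEntry r₀ c₀ v T r c = v :=
  if_pos h

theorem updateEntry_updateEntry_of_eq {w : ℕ} (h : T r₀ c₀ = v) :
    updateEntry r₀ c₀ v (updateEntry r₀ c₀ w T) = T := by
  funext r c
  by_cases hrc : r = r₀ ∧ c = c₀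
  · rw [updateEntry_of_eq hrc, hrc.1, hrc.2, h]
  · rw [updateEntry_of_ne hrc, updateEntry_of_ne hrc]

end updateEntry

namespace IsTableauOn

variable {cell : ℕ → ℕ → Prop} {N : ℕ} {T : ℕ → ℕ → ℕ} {r₀ c₀ : ℕ}

theorem cell_of_pos (hT : IsTableauOn cell N T) {r c : ℕ} (h : 0 < T r c) : cell r c := by
  by_contra hc
  exact h.ne' (hT.1 r c hc)

theorem eq_of_eq_of_pos (hT : IsTableauOn cell N T) {r c r' c' : ℕ} (h : T r c = T r' c')
    (hpos : 0 < T r c) : r = r' ∧ c = c' :=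
  hT.2.2.1 r c r' c' (hT.cell_of_pos hpos) (hT.cell_of_pos (h ▸ hpos)) h

theorem isCorner_of_eq_max (hT : IsTableauOn cell (N + 1) T) {r c : ℕ} (h : T r c = N + 1) :
    cell r c ∧ ¬cell r (c + 1) ∧ ¬cell (r + 1) c := by
  have hrc : cell r c := hT.cell_of_pos (by omega)
  refine ⟨hrc, fun hright => ?_, fun hbelow => ?_⟩
  · have := hT.2.2.2.2.1 r c hrc hright
    have := (hT.2.1 r (c + 1) hright).2
    omega
  · have := hT.2.2.2.2.2 r c hrc hbelow
    have := (hT.2.1 (r + 1) c hbelow).2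
    omega

theorem setOf_finite {R C : ℕ} (hbox : ∀ r c, cell r c → r < R ∧ c < C) :
    {T | IsTableauOn cell N T}.Finite := by
  refine Set.Finite.of_finite_image
    (f := fun T (i : Fin R) (j : Fin C) => Fin.ofNat (N + 1) (T i j))
    (Set.toFinite _) fun T hT T' hT' heq => funext₂ fun r c => ?_
  by_cases hrc : cell r c
  · obtain ⟨hr, hc⟩ := hbox r c hrc
    have h := congrArg Fin.val (congrFun₂ heq ⟨r, hr⟩ ⟨c, hc⟩)
    simp only [Fin.val_ofNat] at h
    rwa [Nat.mod_eq_of_lt (by have := (hT.2.1 r c hrc).2; omega),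
      Nat.mod_eq_of_lt (by have := (hT'.2.1 r c hrc).2; omega)] at h
  · rw [hT.1 r c hrc, hT'.1 r c hrc]

theorem setOf_of_forall_not (h : ∀ r c, ¬cell r c) : {T | IsTableauOn cell 0 T} = {0} := by
  ext T
  refine ⟨fun hT => funext₂ fun r c => hT.1 r c (h r c), ?_⟩
  rintro rfl
  exact ⟨fun _ _ _ => rfl, fun r c hc => (h r c hc).elim, fun r c _ _ hc => (h r c hc).elim,
    fun v hv hv0 => by omega, fun r c hc => (h r c hc).elim, fun r c hc => (h r c hc).elim⟩

theorem erase_corner (hT : IsTableauOn cell (N + 1) T) (hmax : T r₀ c₀ = N + 1) :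
    IsTableauOn (eraseCell cell r₀ c₀) N (updateEntry r₀ c₀ 0 T) := by
  have hle : ∀ r c, eraseCell cell r₀ c₀ r c → T r c ≤ N := fun r c ⟨hrc, hne⟩ => by
    have := (hT.2.1 r c hrc).2
    have : T r c ≠ N + 1 := fun h => hne (hT.eq_of_eq_of_pos (h.trans hmax.symm) (by omega))
    omega
  obtain ⟨hzero, hrange, hinj, hsurj, hrow, hcol⟩ := hT
  refine ⟨fun r c h => ?_, fun r c h => ?_, fun r c r' c' h h' => ?_, fun v hv hvN => ?_,
    fun r c h h' => ?_, fun r c h h' => ?_⟩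
  · by_cases hrc : r = r₀ ∧ c = c₀
    · exact updateEntry_of_eq hrc
    · rw [updateEntry_of_ne hrc, hzero r c fun hc => h ⟨hc, hrc⟩]
  · rw [updateEntry_of_ne h.2]
    exact ⟨(hrange r c h.1).1, hle r c h⟩
  · rw [updateEntry_of_ne h.2, updateEntry_of_ne h'.2]
    exact hinj r c r' c' h.1 h'.1
  · obtain ⟨r, c, hrc, rfl⟩ := hsurj v hv (by omega)
    have hne : ¬(r = r₀ ∧ c = c₀) := by rintro ⟨rfl, rfl⟩; omega
    exact ⟨r, c, ⟨hrc, hne⟩, updateEntry_of_ne hne⟩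
  · rw [updateEntry_of_ne h.2, updateEntry_of_ne h'.2]
    exact hrow r c h.1 h'.1
  · rw [updateEntry_of_ne h.2, updateEntry_of_ne h'.2]
    exact hcol r c h.1 h'.1

theorem insert_corner (hT : IsTableauOn (eraseCell cell r₀ c₀) N T) (hcell : cell r₀ c₀)
    (hright : ¬cell r₀ (c₀ + 1)) (hbelow : ¬cell (r₀ + 1) c₀) :
    IsTableauOn cell (N + 1) (updateEntry r₀ c₀ (N + 1) T) := by
  obtain ⟨hzero, hrange, hinj, hsurj, hrow, hcol⟩ := hT
  have hval : ∀ r c, cell r c → ¬(r = r₀ ∧ c = c₀) → 1 ≤ T r c ∧ T r c ≤ N :=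
    fun r c h hne => hrange r c ⟨h, hne⟩
  refine ⟨fun r c h => ?_, fun r c h => ?_, fun r c r' c' h h' heq => ?_, fun v hv hvN => ?_,
    fun r c h h' => ?_, fun r c h h' => ?_⟩
  · have hne : ¬(r = r₀ ∧ c = c₀) := by rintro ⟨rfl, rfl⟩; exact h hcell
    rw [updateEntry_of_ne hne, hzero r c fun hc => h hc.1]
  · by_cases hne : r = r₀ ∧ c = c₀
    · rw [updateEntry_of_eq hne]
      omega
    · rw [updateEntry_of_ne hne]
      have := hval r c h hne
      omega
  · by_cases hne : r = r₀ ∧ c = c₀ <;> by_cases hne' : r' = r₀ ∧ c' = c₀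
    · exact ⟨hne.1.trans hne'.1.symm, hne.2.trans hne'.2.symm⟩
    · rw [updateEntry_of_eq hne, updateEntry_of_ne hne'] at heq
      have := hval r' c' h' hne'
      omega
    · rw [updateEntry_of_eq hne', updateEntry_of_ne hne] at heq
      have := hval r c h hne
      omega
    · rw [updateEntry_of_ne hne, updateEntry_of_ne hne'] at heq
      exact hinj r c r' c' ⟨h, hne⟩ ⟨h', hne'⟩ heq
  · rcases (show v ≤ N ∨ v = N + 1 by omega) with hvN | rfl
    · obtain ⟨r, c, hrc, rfl⟩ := hsurj v hv hvN
      exact ⟨r, c, hrc.1, updateEntry_of_ne hrc.2⟩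
    · exact ⟨r₀, c₀, hcell, updateEntry_of_eq ⟨rfl, rfl⟩⟩
  · have hne : ¬(r = r₀ ∧ c = c₀) := by rintro ⟨rfl, rfl⟩; exact hright h'
    rw [updateEntry_of_ne hne]
    by_cases hne' : r = r₀ ∧ c + 1 = c₀
    · rw [updateEntry_of_eq hne']
      have := hval r c h hne
      omega
    · rw [updateEntry_of_ne hne']
      exact hrow r c ⟨h, hne⟩ ⟨h', hne'⟩
  · have hne : ¬(r = r₀ ∧ c = c₀) := by rintro ⟨rfl, rfl⟩; exact hbelow h'
    rw [updateEntry_of_ne hne]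
    by_cases hne' : r + 1 = r₀ ∧ c = c₀
    · rw [updateEntry_of_eq hne']
      have := hval r c h hne
      omega
    · rw [updateEntry_of_ne hne']
      exact hcol r c ⟨h, hne⟩ ⟨h', hne'⟩

theorem ncard_setOf_max_at_corner (hcell : cell r₀ c₀) (hright : ¬cell r₀ (c₀ + 1))
    (hbelow : ¬cell (r₀ + 1) c₀) :
    {T | IsTableauOn cell (N + 1) T ∧ T r₀ c₀ = N + 1}.ncard =
      {T | IsTableauOn (eraseCell cell r₀ c₀) N T}.ncard := by
  refine (Set.InvOn.bijOn (f := updateEntry r₀ c₀ 0) (f' := updateEntry r₀ c₀ (N + 1))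
    ⟨fun T hT => updateEntry_updateEntry_of_eq hT.2,
      fun T hT => updateEntry_updateEntry_of_eq ?_⟩ ?_ ?_).ncard_eq
  · exact hT.1 r₀ c₀ fun h => h.2 ⟨rfl, rfl⟩
  · exact fun T hT => hT.1.erase_corner hT.2
  · exact fun T hT => ⟨hT.insert_corner hcell hright hbelow, updateEntry_of_eq ⟨rfl, rfl⟩⟩

open Classical in
theorem ncard_setOf_max_at :
    {T | IsTableauOn cell (N + 1) T ∧ T r₀ c₀ = N + 1}.ncard =
      if cell r₀ c₀ ∧ ¬cell r₀ (c₀ + 1) ∧ ¬cell (r₀ + 1) c₀ then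
        {T | IsTableauOn (eraseCell cell r₀ c₀) N T}.ncard
      else 0 := by
  split_ifs with h
  · exact ncard_setOf_max_at_corner h.1 h.2.1 h.2.2
  · refine (congrArg Set.ncard (Set.eq_empty_of_forall_notMem fun T hT => ?_)).trans
      (Set.ncard_empty _)
    exact h (hT.1.isCorner_of_eq_max hT.2)

theorem ncard_setOf_eq_sum_max_at (C : Finset (ℕ × ℕ))
    (hfin : {T | IsTableauOn cell (N + 1) T}.Finite)
    (hC : ∀ r c, cell r c → ¬cell r (c + 1) → ¬cell (r + 1) c → (r, c) ∈ C) :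
    {T | IsTableauOn cell (N + 1) T}.ncard =
      ∑ x ∈ C, {T | IsTableauOn cell (N + 1) T ∧ T x.1 x.2 = N + 1}.ncard := by
  have hunion : {T | IsTableauOn cell (N + 1) T} =
      ⋃ x ∈ (C : Set (ℕ × ℕ)), {T | IsTableauOn cell (N + 1) T ∧ T x.1 x.2 = N + 1} := by
    ext T
    simp only [Set.mem_ofPred_eq, Set.mem_iUnion, Finset.mem_coe, exists_prop]
    refine ⟨fun hT => ?_, fun ⟨_, _, hT, _⟩ => hT⟩
    obtain ⟨r, c, -, hmax⟩ := hT.2.2.2.1 (N + 1) (by omega) le_rfl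
    obtain ⟨h, hright, hbelow⟩ := hT.isCorner_of_eq_max hmax
    exact ⟨(r, c), hC r c h hright hbelow, hT, hmax⟩
  rw [hunion, C.finite_toSet.ncard_biUnion (fun _ _ => hfin.subset fun _ hT => hT.1) ?_,
    finsum_mem_coe_finset]
  intro x _ y _ hxy
  rw [Function.onFun, Set.disjoint_left]
  rintro T ⟨hT, hx⟩ ⟨-, hy⟩
  exact hxy (Prod.ext_iff.2 (hT.eq_of_eq_of_pos (hx.trans hy.symm) (by omega)))

end IsTableauOn

/-- `(a+b+c)!` divided by the product of the hook lengths of the partition `(a, b, c)`. -/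
def threeRowHook (a b c : ℕ) : ℚ :=
  (a + b + c)! * (((a : ℚ) - b + 1) * ((b : ℚ) - c + 1) * ((a : ℚ) - c + 2)) /
    ((a + 2)! * (b + 1)! * c !)

section threeRowHook

variable {a b c N : ℕ}

/- The four terms of the branching recurrence, each written over the common factor
`N! / ((a+2)! (b+1)! c!)`; the recurrence is then a polynomial identity. -/

theorem threeRowHook_eq (hN : a + b + c = N + 1) :
    threeRowHook a b c = N ! / ((a + 2)! * (b + 1)! * c !) *
      ((N + 1) * (((a : ℚ) - b + 1) * ((b : ℚ) - c + 1) * ((a : ℚ) - c + 2))) := by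
  rw [threeRowHook, hN, Nat.factorial_succ]
  push_cast
  ring

theorem ite_threeRowHook_pred_fst (hba : b ≤ a) (hN : a + b + c = N + 1) :
    (if b < a then threeRowHook (a - 1) b c else 0) = N ! / ((a + 2)! * (b + 1)! * c !) *
      (((a : ℚ) - b) * ((b : ℚ) - c + 1) * ((a : ℚ) - c + 1) * (a + 2)) := by
  split_ifs with h
  · obtain ⟨a, rfl⟩ : ∃ a', a = a' + 1 := ⟨a - 1, by omega⟩
    rw [threeRowHook, Nat.add_sub_cancel, show a + b + c = N by omega,
      show a + 1 + 2 = a + 2 + 1 by omega, Nat.factorial_succ (a + 2)]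
    push_cast
    field_simp
    ring
  · obtain rfl : a = b := by omega
    simp

theorem ite_threeRowHook_pred_snd (hcb : c ≤ b) (hN : a + b + c = N + 1) :
    (if c < b then threeRowHook a (b - 1) c else 0) = N ! / ((a + 2)! * (b + 1)! * c !) *
      (((a : ℚ) - b + 2) * ((b : ℚ) - c) * ((a : ℚ) - c + 2) * (b + 1)) := by
  split_ifs with h
  · obtain ⟨b, rfl⟩ : ∃ b', b = b' + 1 := ⟨b - 1, by omega⟩
    rw [threeRowHook, Nat.add_sub_cancel, show a + b + c = N by omega,
      Nat.factorial_succ (b + 1)]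
    push_cast
    field_simp
    ring
  · obtain rfl : b = c := by omega
    simp

theorem ite_threeRowHook_pred_thd (hN : a + b + c = N + 1) :
    (if 0 < c then threeRowHook a b (c - 1) else 0) = N ! / ((a + 2)! * (b + 1)! * c !) *
      (((a : ℚ) - b + 1) * ((b : ℚ) - c + 2) * ((a : ℚ) - c + 3) * c) := by
  split_ifs with h
  · obtain ⟨c, rfl⟩ : ∃ c', c = c' + 1 := ⟨c - 1, by omega⟩
    rw [threeRowHook, Nat.add_sub_cancel, show a + b + c = N by omega, Nat.factorial_succ c]
    push_cast
    field_simp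
    ring
  · obtain rfl : c = 0 := by omega
    simp

theorem threeRowHook_eq_add (hba : b ≤ a) (hcb : c ≤ b) (hN : a + b + c = N + 1) :
    threeRowHook a b c = (if b < a then threeRowHook (a - 1) b c else 0) +
      (if c < b then threeRowHook a (b - 1) c else 0) +
      (if 0 < c then threeRowHook a b (c - 1) else 0) := by
  have hNq : (N : ℚ) + 1 = a + b + c := by exact_mod_cast hN.symm
  rw [threeRowHook_eq hN, ite_threeRowHook_pred_fst hba hN, ite_threeRowHook_pred_snd hcb hN,
    ite_threeRowHook_pred_thd hN, hNq]
  ring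

end threeRowHook

theorem skewCell_three {a b c r x : ℕ} :
    skewCell [a, b, c] [] r x ↔
      (r = 0 ∧ x < a) ∨ (r = 1 ∧ x < b) ∨ (r = 2 ∧ x < c) := by
  rcases r with _ | _ | _ | r <;> simp [skewCell]

section threeRows

variable {a b c N : ℕ}

theorem ncard_isTableauOn_eq_skewSYTCount_three {cell : ℕ → ℕ → Prop}
    (hcell : ∀ r x, cell r x ↔ skewCell [a, b, c] [] r x) (hN : a + b + c = N) :
    {T | IsTableauOn cell N T}.ncard = skewSYTCount [a, b, c] [] := by
  have hsum : [a, b, c].sum - ([] : List ℕ).sum = N := by simp [← hN, add_assoc]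
  rw [skewSYTCount, ← Nat.card_coe_set_eq]
  simp only [IsSkewSYT, hsum, ← funext₂ fun r x => propext (hcell r x)]
  rfl

theorem skewSYTCount_three_eq_add (hba : b ≤ a) (hcb : c ≤ b) (hN : a + b + c = N + 1) :
    skewSYTCount [a, b, c] [] = (if b < a then skewSYTCount [a - 1, b, c] [] else 0) +
      (if c < b then skewSYTCount [a, b - 1, c] [] else 0) +
      (if 0 < c then skewSYTCount [a, b, c - 1] [] else 0) := by
  have hfin : {T | IsTableauOn (skewCell [a, b, c] []) (N + 1) T}.Finite :=
    IsTableauOn.setOf_finite (R := 3) (C := a + b + c) fun r x h => by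
      rw [skewCell_three] at h
      omega
  rw [← ncard_isTableauOn_eq_skewSYTCount_three (fun _ _ => Iff.rfl) hN,
    IsTableauOn.ncard_setOf_eq_sum_max_at {(0, a - 1), (1, b - 1), (2, c - 1)} hfin
      fun r x h hright hbelow => by
        simp only [skewCell_three] at h hright hbelow
        simp only [Finset.mem_insert, Finset.mem_singleton, Prod.mk.injEq]
        omega,
    Finset.sum_insert (by simp), Finset.sum_insert (by simp), Finset.sum_singleton, ← add_assoc]
  simp only [IsTableauOn.ncard_setOf_max_at]
  congr 1
  congr 1
  all_goals
    refine ite_congr (propext ?_) (fun h => ?_) (fun _ => rfl)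
    · simp only [skewCell_three, true_and]
      omega
    · refine ncard_isTableauOn_eq_skewSYTCount_three (fun r x => ?_) ?_
      · simp only [eraseCell, skewCell_three]
        omega
      · omega

theorem skewSYTCount_three_eq_threeRowHook (hba : b ≤ a) (hcb : c ≤ b) :
    (skewSYTCount [a, b, c] [] : ℚ) = threeRowHook a b c := by
  induction hN : a + b + c generalizing a b c with
  | zero =>
    obtain ⟨rfl, rfl, rfl⟩ : a = 0 ∧ b = 0 ∧ c = 0 := by omega
    rw [← ncard_isTableauOn_eq_skewSYTCount_three (fun _ _ => Iff.rfl) rfl,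
      IsTableauOn.setOf_of_forall_not fun r x h => by rw [skewCell_three] at h; omega]
    simp [threeRowHook]
  | succ N ih =>
    rw [skewSYTCount_three_eq_add hba hcb hN, threeRowHook_eq_add hba hcb hN]
    push_cast
    congr 1
    congr 1
    all_goals
      split_ifs
      · exact ih (by omega) (by omega) (by omega)
      · rfl

end threeRows

/-- for `2 ≤ k ≤ ⌊(n+1)/2⌋`, the number of SYTs of shape `(n, n+1-k, k)`
is `((n-2k+2)/(k-1)) · binom(n-1, k-2) · binom(2n+1, n-1)`. -/
theorem syt_three_row_count (n k : ℕ) (hk1 : 2 ≤ k) (hk2 : k ≤ (n + 1) / 2) :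
    (skewSYTCount [n, n + 1 - k, k] [] : ℚ) =
      (((n : ℚ) - 2 * (k : ℚ) + 2) / ((k : ℚ) - 1)) * ((n - 1).choose (k - 2) : ℚ) *
        ((2 * n + 1).choose (n - 1) : ℚ) := by
  rw [skewSYTCount_three_eq_threeRowHook (by omega) (by omega), threeRowHook]
  obtain ⟨j, rfl⟩ : ∃ j, k = j + 2 := ⟨k - 2, by omega⟩
  obtain ⟨m, rfl⟩ : ∃ m, n = m + 2 * j + 3 := ⟨n - 2 * j - 3, by omega⟩
  rw [Nat.cast_choose ℚ (show j + 2 - 2 ≤ m + 2 * j + 3 - 1 by omega),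
    Nat.cast_choose ℚ (show m + 2 * j + 3 - 1 ≤ 2 * (m + 2 * j + 3) + 1 by omega),
    show m + 2 * j + 3 + 1 - (j + 2) = m + j + 2 by omega,
    show m + 2 * j + 3 + (m + j + 2) + (j + 2) = 2 * (m + 2 * j + 3) + 1 by omega,
    show m + 2 * j + 3 - 1 - (j + 2 - 2) = m + j + 2 by omega,
    show 2 * (m + 2 * j + 3) + 1 - (m + 2 * j + 3 - 1) = m + 2 * j + 3 + 2 by omega,
    show m + 2 * j + 3 - 1 = m + 2 * j + 2 by omega, Nat.add_sub_cancel,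
    Nat.factorial_succ (m + j + 2), Nat.factorial_succ (j + 1), Nat.factorial_succ j,
    show ((j + 2 : ℕ) : ℚ) - 1 = j + 1 by push_cast; ring]
  push_cast
  field_simp
  ring
end
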